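/- Let |b⟩ = |0⟩⊗F|0⟩. Then for every a ∈ [0..d-1]² with a ≠ (0,0), ⟨b| P_sym (T_a⊗T_a) |b⟩ = 1/(2d). Consequently the frame {√(2d/(d+1)) P_sym (T_a⊗T_a)|b⟩} is an equiangular tight frame on H_sym: distinct frame vectors have inner products of absolute value 1/(d+1). -/

import Mathlib

open Matrix Complex BigOperators

noncomputable def ww (d : ℕ) : ℂ := Complex.exp (2 * Real.pi * Complex.I / d)

noncomputable def tt (d : ℕ) : ℂ := Complex.exp (2 * Real.pi * Complex.I * (d + 1) / (2 * d))

/-- Displacement operator `T_a = τ^{a₁a₂} S^{a₁} C^{a₂}` as a concrete matrix. -/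
noncomputable def T (d : ℕ) (a : ℤ × ℤ) : Matrix (ZMod d) (ZMod d) ℂ :=
  Matrix.of fun i j => tt d ^ (a.1 * a.2) *
    (if i = j + (a.1 : ZMod d) then ww d ^ (a.2 * (j.val : ℤ)) else 0)

def fz {d : ℕ} (a : Fin d × Fin d) : ℤ × ℤ := (((a.1 : ℕ) : ℤ), ((a.2 : ℕ) : ℤ))

noncomputable def dotc {α : Type*} [Fintype α] (v w : α → ℂ) : ℂ := ∑ p, star (v p) * w p

/-- Orthogonal projection onto the symmetric subspace of `ℂ^d ⊗ ℂ^d`. -/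
noncomputable def Psym (d : ℕ) : Matrix (ZMod d × ZMod d) (ZMod d × ZMod d) ℂ :=
  Matrix.of fun p q => (1 / 2 : ℂ) * ((if p = q then 1 else 0) + (if p = (q.2, q.1) then 1 else 0))

/-- `T_a ⊗ T_a` -/
noncomputable def TT (d : ℕ) (a : ℤ × ℤ) : Matrix (ZMod d × ZMod d) (ZMod d × ZMod d) ℂ :=
  Matrix.kroneckerMap (· * ·) (T d a) (T d a)

/-- Discrete Fourier transform matrix. -/
noncomputable def Fdft (d : ℕ) : Matrix (ZMod d) (ZMod d) ℂ :=
  Matrix.of fun i j => ((1 / Real.sqrt d : ℝ) : ℂ) * ww d ^ (i.val * j.val)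

/-- The vector `|0⟩ ⊗ F|0⟩`. -/
noncomputable def b0 (d : ℕ) : ZMod d × ZMod d → ℂ :=
  fun p => (if p.1 = 0 then 1 else 0) * Fdft d p.2 0

/-- Partial trace over the first factor of `|v⟩⟨v|`. -/
noncomputable def ptrace1 (d : ℕ) [NeZero d] (v : ZMod d × ZMod d → ℂ) :
    Matrix (ZMod d) (ZMod d) ℂ :=
  Matrix.of fun j l => ∑ i, v (i, j) * star (v (i, l))

/-- tensor square of a vector -/
noncomputable def tp {d : ℕ} (f : ZMod d → ℂ) : ZMod d × ZMod d → ℂ :=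
  fun p => f p.1 * f p.2

/-- `b` is a fiducial vector of a WH-type basis. -/
def IsWHFiducial (d : ℕ) [NeZero d] (b : ZMod d × ZMod d → ℂ) : Prop :=
  dotc b b = 1 ∧ ∀ a : Fin d × Fin d, ((a.1 : ℕ), (a.2 : ℕ)) ≠ (0, 0) →
    dotc b ((TT d (fz a)).mulVec b) = 0

noncomputable def Cm (d : ℕ) : Matrix (ZMod d) (ZMod d) ℂ :=
  Matrix.of fun i j => if i = j then ww d ^ (i.val) else 0

noncomputable def Sm (d : ℕ) : Matrix (ZMod d) (ZMod d) ℂ :=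
  Matrix.of fun i j => if i = j + 1 then 1 else 0

/-- `(1/√2)(|j⟩|j+i⟩ ± |j+i⟩|j⟩)` (up to normalization), sign `s`. -/
noncomputable def symVec (d : ℕ) (i s : ℤ) (j : ZMod d) : ZMod d × ZMod d → ℂ :=
  fun p => (if p = (j, j + (i : ZMod d)) then 1 else 0) +
    (s : ℂ) * (if p = (j + (i : ZMod d), j) then 1 else 0)

/-- The invariant subspace `H_{±i}`. -/
noncomputable def Hsub (d : ℕ) (i s : ℤ) : Submodule ℂ (ZMod d × ZMod d → ℂ) :=
  Submodule.span ℂ (Set.range (symVec d i s))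

/-- The swap operator on `ℂ^d ⊗ ℂ^d`. -/
def swapL (d : ℕ) : (ZMod d × ZMod d → ℂ) →ₗ[ℂ] (ZMod d × ZMod d → ℂ) where
  toFun v := fun p => v (p.2, p.1)
  map_add' _ _ := rfl
  map_smul' _ _ := rfl

/-- `H_t` for `t ∈ [-(d-1)/2 .. (d-1)/2]` (d odd). -/
noncomputable def Hodd (d : ℕ) (t : ℤ) : Submodule ℂ (ZMod d × ZMod d → ℂ) :=
  if 0 ≤ t then Hsub d t 1 else Hsub d (-t) (-1)

/-!
Write `x_a = (T_a ⊗ T_a)|b⟩`. Since `T_a|0⟩ = τ^{a₁a₂}|a₁⟩` and `F|0⟩` is the uniform vector,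
`x_a` is supported on the row `{a₁} × ℤ_d`, with entries `d^{-1/2} τ^{2a₁a₂} ω^{a₂(j - a₁)}`.
Hence distinct `x_a` are orthogonal (a nontrivial character sum over the row), while
`⟨x_a, SWAP x_b⟩` is a single product of entries, at `(a₁, b₁)` and `(b₁, a₁)`, of modulus `1/d`.
As `P_sym = (1 + SWAP)/2` is a self-adjoint projection,
`⟨P_sym x_a, P_sym x_b⟩ = (⟨x_a, x_b⟩ + ⟨x_a, SWAP x_b⟩)/2` has modulus `1/(2d)` for `a ≠ b`.
For `b = 0` we have `x_0 = |b⟩`, and the phase `τ^{2a₁a₂} ω^{-a₁a₂}` equals `1` because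
`τ² = ω^{d+1}`, so the inner product is exactly `1/(2d)`.
-/

section SymmetricProjection

variable {α β : Type*} [Fintype α]

lemma dotc_eq_star_dotProduct (v w : α → ℂ) : dotc v w = star v ⬝ᵥ w := rfl

lemma dotc_ofReal_smul_ofReal_smul (r : ℝ) (v w : α → ℂ) :
    dotc ((r : ℂ) • v) ((r : ℂ) • w) = ((r ^ 2 : ℝ) : ℂ) * dotc v w := by
  simp only [dotc_eq_star_dotProduct, star_smul, smul_dotProduct, dotProduct_smul, smul_eq_mul,
    Complex.star_def, conj_ofReal]
  push_cast
  ring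

lemma dotc_eq_sum_row [Fintype β] {u : α × β → ℂ} (i : α) (hu : ∀ p, p.1 ≠ i → u p = 0)
    (v : α × β → ℂ) : dotc u v = ∑ j, star (u (i, j)) * v (i, j) := by
  rw [dotc, Fintype.sum_prod_type, Finset.sum_eq_single i]
  · intro k _ hk
    exact Finset.sum_eq_zero fun j _ => by rw [hu (k, j) hk, star_zero, zero_mul]
  · exact fun h => absurd (Finset.mem_univ i) h

variable {d : ℕ} [NeZero d]

lemma dotc_swapL_left (u v : ZMod d × ZMod d → ℂ) :
    dotc (swapL d u) v = dotc u (swapL d v) :=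
  Fintype.sum_equiv (Equiv.prodComm _ _) _ _ fun _ => rfl

lemma Psym_mulVec (v : ZMod d × ZMod d → ℂ) :
    Psym d *ᵥ v = (1 / 2 : ℂ) • (v + swapL d v) := by
  ext p
  simp only [Psym, mulVec, dotProduct, of_apply, Pi.smul_apply, Pi.add_apply, smul_eq_mul,
    mul_assoc, ← Finset.mul_sum, add_mul, ite_mul, one_mul, zero_mul, Finset.sum_add_distrib]
  congr 2
  · simp
  · simp [swapL, Prod.ext_iff, Fintype.sum_prod_type, ite_and]

lemma swapL_Psym_mulVec (v : ZMod d × ZMod d → ℂ) :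
    swapL d (Psym d *ᵥ v) = Psym d *ᵥ v := by
  rw [Psym_mulVec, map_smul, map_add, add_comm]
  rfl

lemma dotc_Psym_mulVec_right (u v : ZMod d × ZMod d → ℂ) :
    dotc u (Psym d *ᵥ v) = (dotc u v + dotc u (swapL d v)) / 2 := by
  simp only [Psym_mulVec, dotc_eq_star_dotProduct, dotProduct_smul, dotProduct_add, smul_eq_mul]
  ring

lemma dotc_Psym_mulVec_Psym_mulVec (u v : ZMod d × ZMod d → ℂ) :
    dotc (Psym d *ᵥ u) (Psym d *ᵥ v) = dotc u (Psym d *ᵥ v) := by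
  have hswap : dotc (swapL d u) (Psym d *ᵥ v) = dotc u (Psym d *ᵥ v) := by
    rw [dotc_swapL_left, swapL_Psym_mulVec]
  rw [Psym_mulVec u, dotc_eq_star_dotProduct, star_smul, add_comm, star_add, smul_dotProduct,
    add_dotProduct, ← dotc_eq_star_dotProduct, ← dotc_eq_star_dotProduct, hswap, smul_eq_mul]
  simp only [star_div₀, star_one, star_ofNat]
  ring

end SymmetricProjection

namespace WeylHeisenberg

variable {d : ℕ}

lemma norm_ww : ‖ww d‖ = 1 := by
  rw [ww, show 2 * Real.pi * I / d = ((2 * Real.pi / d : ℝ) : ℂ) * I by push_cast; ring,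
    norm_exp_ofReal_mul_I]

lemma norm_tt : ‖tt d‖ = 1 := by
  rw [tt, show 2 * Real.pi * I * (d + 1) / (2 * d) =
      ((2 * Real.pi * (d + 1) / (2 * d) : ℝ) : ℂ) * I by push_cast; ring,
    norm_exp_ofReal_mul_I]

lemma ww_ne_zero : ww d ≠ 0 := exp_ne_zero _

lemma star_ww_zpow (n : ℤ) : star (ww d ^ n) = ww d ^ (-n) := by
  rw [star_zpow₀, Complex.star_def, ← Complex.inv_eq_conj norm_ww, _root_.inv_zpow']

lemma T_zero : T d 0 = 1 := by
  ext i j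
  simp [T, Matrix.one_apply]

lemma TT_zero : TT d 0 = 1 := by
  rw [TT, T_zero, Matrix.one_kronecker_one]

lemma intCast_fz_injective :
    Function.Injective fun a : Fin d × Fin d => (((fz a).1 : ZMod d), ((fz a).2 : ZMod d)) := by
  intro a b h
  simp only [fz, Int.cast_natCast, Prod.ext_iff, ZMod.natCast_eq_natCast_iff',
    Nat.mod_eq_of_lt (Fin.is_lt _)] at h
  exact Prod.ext (Fin.ext h.1) (Fin.ext h.2)

variable [NeZero d]

lemma isPrimitiveRoot_ww : IsPrimitiveRoot (ww d) d :=
  isPrimitiveRoot_exp d (NeZero.ne d)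

lemma tt_sq : tt d ^ 2 = ww d ^ ((d : ℤ) + 1) := by
  have hd : (d : ℂ) ≠ 0 := Nat.cast_ne_zero.2 (NeZero.ne d)
  rw [show (d : ℤ) + 1 = ((d + 1 : ℕ) : ℤ) by push_cast; ring, zpow_natCast, tt, ww,
    ← exp_nat_mul, ← exp_nat_mul]
  congr 1
  push_cast
  field_simp

lemma ww_zpow_eq_of_cast_eq {m n : ℤ} (h : (m : ZMod d) = n) : ww d ^ m = ww d ^ n := by
  rw [← sub_eq_zero, ← Int.cast_sub, ZMod.intCast_zmod_eq_zero_iff_dvd,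
    ← isPrimitiveRoot_ww.zpow_eq_one_iff_dvd, zpow_sub₀ ww_ne_zero, div_eq_one_iff_eq] at h
  · exact h
  · exact zpow_ne_zero _ ww_ne_zero

lemma sum_ww_zpow_mul_val {k : ℤ} (hk : (k : ZMod d) ≠ 0) :
    ∑ j : ZMod d, ww d ^ (k * (j.val : ℤ)) = 0 := by
  have hz : ww d ^ k ≠ 1 := by
    rwa [Ne, isPrimitiveRoot_ww.zpow_eq_one_iff_dvd, ← ZMod.intCast_zmod_eq_zero_iff_dvd]
  have hzd : (ww d ^ k) ^ d = 1 := by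
    rw [← zpow_natCast, ← _root_.zpow_mul, mul_comm, _root_.zpow_mul, zpow_natCast,
      isPrimitiveRoot_ww.pow_eq_one, _root_.one_zpow]
  calc ∑ j : ZMod d, ww d ^ (k * (j.val : ℤ))
      = ∑ i ∈ Finset.range d, (ww d ^ k) ^ i := by
        refine Finset.sum_nbij' (fun j => j.val) (fun i => (i : ZMod d)) ?_ ?_ ?_ ?_ ?_
        · exact fun j _ => Finset.mem_range.2 (ZMod.val_lt j)
        · exact fun i _ => Finset.mem_univ _
        · exact fun j _ => ZMod.natCast_zmod_val j
        · exact fun i hi => ZMod.val_cast_of_lt (Finset.mem_range.1 hi)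
        · exact fun j _ => by rw [_root_.zpow_mul, zpow_natCast]
    _ = 0 := by rw [geom_sum_eq hz, hzd, sub_self, zero_div]

lemma tt_zpow_sq_mul_ww_zpow (m n : ℤ) :
    (tt d ^ (m * n)) ^ 2 * ww d ^ (n * ((-(m : ZMod d)).val : ℤ)) = 1 := by
  have htt : (tt d ^ (m * n)) ^ 2 = ww d ^ (((d : ℤ) + 1) * (m * n)) := by
    rw [← zpow_natCast, ← _root_.zpow_mul, mul_comm, _root_.zpow_mul, zpow_natCast, tt_sq,
      ← _root_.zpow_mul]
  rw [htt, ← zpow_add₀ ww_ne_zero, ← zpow_zero (ww d)]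
  exact ww_zpow_eq_of_cast_eq <| by
    push_cast
    simp only [ZMod.natCast_self, ZMod.natCast_zmod_val]
    ring

lemma TT_mulVec_b0_apply (a : ℤ × ℤ) (p : ZMod d × ZMod d) :
    (TT d a *ᵥ b0 d) p = if p.1 = a.1 then
      ((Real.sqrt d : ℝ) : ℂ)⁻¹ * (tt d ^ (a.1 * a.2)) ^ 2 *
        ww d ^ (a.2 * ((p.2 - a.1 : ZMod d).val : ℤ)) else 0 := by
  simp only [TT, T, b0, Fdft, mulVec, dotProduct, kroneckerMap_apply, of_apply,
    Fintype.sum_prod_type]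
  simp only [ZMod.val_zero, mul_zero, pow_zero, mul_one, ← sub_eq_iff_eq_add]
  simp only [ite_mul, mul_ite, mul_zero, zero_mul, one_mul, Finset.sum_ite_eq,
    Finset.sum_ite_eq', Finset.mem_univ, if_true, Finset.sum_ite_irrel, Finset.sum_const_zero,
    sub_eq_zero]
  split_ifs
  · simp only [ZMod.val_zero, Nat.cast_zero, mul_zero, zpow_zero, mul_one, one_div,
      ofReal_inv]
    ring
  · rfl

lemma norm_TT_mulVec_b0_apply (a : ℤ × ℤ) {p : ZMod d × ZMod d} (hp : p.1 = a.1) :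
    ‖(TT d a *ᵥ b0 d) p‖ = (Real.sqrt d)⁻¹ := by
  rw [TT_mulVec_b0_apply, if_pos hp, norm_mul, norm_mul, norm_pow, norm_zpow, norm_zpow,
    norm_tt, norm_ww, _root_.one_zpow, _root_.one_zpow, one_pow, mul_one, mul_one, norm_inv,
    norm_real, Real.norm_of_nonneg (Real.sqrt_nonneg _)]

lemma dotc_TT_mulVec_b0_eq_zero {a b : ℤ × ℤ}
    (hab : ((a.1 : ZMod d), (a.2 : ZMod d)) ≠ ((b.1 : ZMod d), (b.2 : ZMod d))) :
    dotc (TT d a *ᵥ b0 d) (TT d b *ᵥ b0 d) = 0 := by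
  rw [dotc_eq_sum_row (a.1 : ZMod d) (fun p hp => by rw [TT_mulVec_b0_apply, if_neg hp])]
  by_cases h1 : (a.1 : ZMod d) = b.1
  · have h2 : ((b.2 - a.2 : ℤ) : ZMod d) ≠ 0 := by
      rw [Int.cast_sub, sub_ne_zero]
      exact fun h2 => hab (Prod.ext h1 h2.symm)
    set C := star (((Real.sqrt d : ℝ) : ℂ)⁻¹ * (tt d ^ (a.1 * a.2)) ^ 2) *
      (((Real.sqrt d : ℝ) : ℂ)⁻¹ * (tt d ^ (b.1 * b.2)) ^ 2)
    calc ∑ j, star ((TT d a *ᵥ b0 d) (a.1, j)) * (TT d b *ᵥ b0 d) (a.1, j)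
        = ∑ j : ZMod d, C * ww d ^ ((b.2 - a.2) * ((j - a.1 : ZMod d).val : ℤ)) := by
          refine Finset.sum_congr rfl fun j _ => ?_
          rw [TT_mulVec_b0_apply, TT_mulVec_b0_apply, if_pos rfl, if_pos h1, ← h1, star_mul,
            star_ww_zpow, _root_.zpow_neg, sub_mul, zpow_sub₀ ww_ne_zero]
          ring
      _ = C * ∑ j : ZMod d, ww d ^ ((b.2 - a.2) * (j.val : ℤ)) := by
          rw [← Finset.mul_sum]
          exact congrArg _ (Fintype.sum_equiv (Equiv.subRight _) _ _ fun _ => rfl)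
      _ = 0 := by rw [sum_ww_zpow_mul_val h2, mul_zero]
  · exact Finset.sum_eq_zero fun j _ => by
      rw [TT_mulVec_b0_apply b, if_neg (show ¬((a.1 : ZMod d), j).1 = b.1 from h1), mul_zero]

lemma dotc_TT_mulVec_b0_swapL (a b : ℤ × ℤ) :
    dotc (TT d a *ᵥ b0 d) (swapL d (TT d b *ᵥ b0 d)) =
      star ((TT d a *ᵥ b0 d) (a.1, b.1)) * (TT d b *ᵥ b0 d) (b.1, a.1) := by
  rw [dotc_eq_sum_row (a.1 : ZMod d) (fun p hp => by rw [TT_mulVec_b0_apply, if_neg hp]),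
    Finset.sum_eq_single (b.1 : ZMod d)]
  · rfl
  · intro j _ hj
    rw [show swapL d (TT d b *ᵥ b0 d) (a.1, j) = (TT d b *ᵥ b0 d) (j, a.1) from rfl,
      TT_mulVec_b0_apply b, if_neg hj, mul_zero]
  · exact fun h => absurd (Finset.mem_univ _) h

lemma norm_dotc_TT_mulVec_b0_swapL (a b : ℤ × ℤ) :
    ‖dotc (TT d a *ᵥ b0 d) (swapL d (TT d b *ᵥ b0 d))‖ = (d : ℝ)⁻¹ := by
  rw [dotc_TT_mulVec_b0_swapL, norm_mul, norm_star, norm_TT_mulVec_b0_apply a rfl,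
    norm_TT_mulVec_b0_apply b rfl, ← mul_inv, Real.mul_self_sqrt (Nat.cast_nonneg d)]

theorem dotc_b0_Psym_mulVec_TT_mulVec_b0 {a : ℤ × ℤ}
    (ha : ((a.1 : ZMod d), (a.2 : ZMod d)) ≠ 0) :
    dotc (b0 d) (Psym d *ᵥ (TT d a *ᵥ b0 d)) = 1 / (2 * d) := by
  have hb0 : dotc (b0 d) = dotc (TT d 0 *ᵥ b0 d) := by rw [TT_zero, one_mulVec]
  have h0 : (TT d 0 *ᵥ b0 d) (0, a.1) = ((Real.sqrt d : ℝ) : ℂ)⁻¹ := by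
    simp [TT_mulVec_b0_apply]
  have ha' : (TT d a *ᵥ b0 d) (a.1, 0) = ((Real.sqrt d : ℝ) : ℂ)⁻¹ := by
    rw [TT_mulVec_b0_apply, if_pos rfl, zero_sub, mul_assoc, tt_zpow_sq_mul_ww_zpow, mul_one]
  rw [hb0, dotc_Psym_mulVec_right,
    dotc_TT_mulVec_b0_eq_zero (by simpa [Prod.ext_iff] using ha.symm), dotc_TT_mulVec_b0_swapL]
  simp only [Prod.fst_zero, Int.cast_zero, h0, ha', zero_add, star_inv₀, Complex.star_def,
    conj_ofReal]
  rw [← mul_inv, ← ofReal_mul, Real.mul_self_sqrt (Nat.cast_nonneg d), ofReal_natCast]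
  ring

theorem norm_dotc_Psym_mulVec_TT_mulVec_b0 {a b : ℤ × ℤ}
    (hab : ((a.1 : ZMod d), (a.2 : ZMod d)) ≠ ((b.1 : ZMod d), (b.2 : ZMod d))) :
    ‖dotc (Psym d *ᵥ (TT d a *ᵥ b0 d)) (Psym d *ᵥ (TT d b *ᵥ b0 d))‖ = 1 / (2 * d) := by
  rw [dotc_Psym_mulVec_Psym_mulVec, dotc_Psym_mulVec_right, dotc_TT_mulVec_b0_eq_zero hab,
    zero_add, norm_div, norm_dotc_TT_mulVec_b0_swapL, Complex.norm_two]
  ring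

end WeylHeisenberg

open WeylHeisenberg

theorem stmt15 (d : ℕ) [NeZero d] :
    (∀ a : Fin d × Fin d, ((a.1 : ℕ), (a.2 : ℕ)) ≠ (0, 0) →
      dotc (b0 d) ((Psym d).mulVec ((TT d (fz a)).mulVec (b0 d))) = 1 / (2 * (d : ℂ))) ∧
    (let w : Fin d × Fin d → ZMod d × ZMod d → ℂ := fun a =>
        ((Real.sqrt (2 * d / ((d : ℝ) + 1)) : ℝ) : ℂ) •
          (Psym d).mulVec ((TT d (fz a)).mulVec (b0 d))
     ∀ a a' : Fin d × Fin d, a ≠ a' →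
       ‖dotc (w a) (w a')‖ = 1 / ((d : ℝ) + 1)) := by
  refine ⟨fun a ha => dotc_b0_Psym_mulVec_TT_mulVec_b0 ?_, ?_⟩
  · have ha0 : a ≠ 0 := fun h => ha (by simp [h])
    simpa [fz] using intCast_fz_injective.ne ha0
  · intro w a a' haa'
    have hd : (0 : ℝ) < d := Nat.cast_pos.2 (Nat.pos_of_ne_zero (NeZero.ne d))
    simp only [w, dotc_ofReal_smul_ofReal_smul, norm_mul, norm_real,
      norm_dotc_Psym_mulVec_TT_mulVec_b0 (intCast_fz_injective.ne haa'),
      Real.sq_sqrt (by positivity : (0 : ℝ) ≤ 2 * d / (d + 1))]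
    rw [Real.norm_of_nonneg (by positivity)]
    field_simp
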